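/- arXiv:1711.01110 — 6 statements merged into one kernel-verified Lean document; each statement's English description precedes it below -/
import Mathlib

section
/- Let n, m, n_1, ..., n_k be positive integers with m < n = n_1 + ... + n_k. Then -∑_{i=1}^k (n_i/n) log₂(n_i/n) ≥ ((∑_{i=1}^k min(n_i, m)) - m)/(n - m) · log₂(n/m). -/
/-!
Write `p i = a i / n` and `μ = m / n`. For `p ≤ μ` one has `-p log p ≥ p log μ⁻¹`, and for `p ≥ μ`
concavity of `-x log x` bounds it below by its chord through `(μ, μ log μ⁻¹)` and `(1, 0)`.
Both cases read `-p log p ≥ (min p μ - μ p) / (1 - μ) · log μ⁻¹`, and summing over `i`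
(with `∑ p i = 1`) gives the inequality.
-/

open Finset Real

lemma min_sub_mul_div_mul_log_inv_le_negMulLog {μ p : ℝ} (hμ0 : 0 < μ) (hμ1 : μ < 1)
    (hp0 : 0 ≤ p) (hp1 : p ≤ 1) :
    (min p μ - μ * p) / (1 - μ) * log μ⁻¹ ≤ negMulLog p := by
  have hμ : 0 < 1 - μ := sub_pos.2 hμ1
  rcases le_total p μ with hpμ | hμp
  · rw [min_eq_left hpμ, show (p - μ * p) / (1 - μ) = p by field_simp, negMulLog,
      neg_mul, ← mul_neg, ← log_inv]
    rcases hp0.eq_or_lt with rfl | hp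
    · simp
    · exact mul_le_mul_of_nonneg_left (log_le_log (by positivity) (inv_anti₀ hp hpμ)) hp0
  · have hchord := concaveOn_negMulLog.2 (Set.mem_Ici.2 hμ0.le) (Set.mem_Ici.2 zero_le_one)
      (div_nonneg (sub_nonneg.2 hp1) hμ.le) (div_nonneg (sub_nonneg.2 hμp) hμ.le)
      (show (1 - p) / (1 - μ) + (p - μ) / (1 - μ) = 1 by field_simp; ring)
    simp only [smul_eq_mul, negMulLog_one, mul_zero, add_zero] at hchord
    rw [show (1 - p) / (1 - μ) * μ + (p - μ) / (1 - μ) * 1 = p by field_simp; ring] at hchord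
    rw [min_eq_right hμp, log_inv]
    refine le_of_eq_of_le ?_ hchord
    simp only [negMulLog]
    ring

theorem min_sub_div_mul_log_inv_le_sum_negMulLog {ι : Type*} (s : Finset ι) (p : ι → ℝ)
    (hp : ∀ i ∈ s, 0 ≤ p i) (hsum : ∑ i ∈ s, p i = 1) {μ : ℝ} (hμ0 : 0 < μ) (hμ1 : μ < 1) :
    (∑ i ∈ s, min (p i) μ - μ) / (1 - μ) * log μ⁻¹ ≤ ∑ i ∈ s, negMulLog (p i) := by
  have hsplit : (∑ i ∈ s, min (p i) μ - μ) / (1 - μ) * log μ⁻¹ =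
      ∑ i ∈ s, (min (p i) μ - μ * p i) / (1 - μ) * log μ⁻¹ := by
    rw [← sum_mul, ← sum_div, sum_sub_distrib, ← mul_sum, hsum, mul_one]
  rw [hsplit]
  refine sum_le_sum fun i hi ↦ min_sub_mul_div_mul_log_inv_le_negMulLog hμ0 hμ1 (hp i hi) ?_
  exact hsum ▸ single_le_sum hp hi

theorem petrov_entropy_ineq_general (k m n : ℕ) (a : Fin k → ℕ)
    (hm : 0 < m) (hmn : m < n) (hsum : n = ∑ i, a i) :
    -∑ i, ((a i : ℝ) / n) * Real.logb 2 ((a i : ℝ) / n) ≥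
      ((∑ i, (min (a i) m : ℝ)) - m) / ((n : ℝ) - m) * Real.logb 2 ((n : ℝ) / m) := by
  have hmR : (0 : ℝ) < m := by exact_mod_cast hm
  have hmnR : (m : ℝ) < n := by exact_mod_cast hmn
  have hnR : (0 : ℝ) < n := hmR.trans hmnR
  have hp : ∑ i, (a i : ℝ) / n = 1 := by
    rw [← sum_div, ← Nat.cast_sum, ← hsum, div_self hnR.ne']
  have hbound := min_sub_div_mul_log_inv_le_sum_negMulLog univ (fun i ↦ (a i : ℝ) / n)
    (fun i _ ↦ by positivity) hp (div_pos hmR hnR) ((div_lt_one hnR).2 hmnR)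
  simp only [min_div_div_right hnR.le, ← sum_div, inv_div] at hbound
  have hratio : ((∑ i, (min (a i) m : ℝ)) / n - m / n) / (1 - m / n) =
      ((∑ i, (min (a i) m : ℝ)) - m) / ((n : ℝ) - m) := by
    field_simp
  rw [hratio] at hbound
  simp only [logb, mul_div_assoc', ← sum_div, ← neg_div, ge_iff_le]
  refine div_le_div_of_nonneg_right ?_ (log_pos one_lt_two).le
  simpa only [negMulLog, neg_mul, sum_neg_distrib] using hbound

/-- Petrov's entropy-type inequality: for positive integers `m < n = ∑ a i`,
`-∑ (a i / n) log₂ (a i / n) ≥ ((∑ min (a i) m) - m)/(n - m) · log₂ (n / m)`. -/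
theorem petrov_entropy_ineq (k m n : ℕ) (a : Fin k → ℕ)
    (ha : ∀ i, 0 < a i) (hm : 0 < m) (hmn : m < n) (hsum : n = ∑ i, a i) :
    -∑ i, ((a i : ℝ) / n) * Real.logb 2 ((a i : ℝ) / n) ≥
      ((∑ i, (min (a i) m : ℝ)) - m) / ((n : ℝ) - m) * Real.logb 2 ((n : ℝ) / m) :=
  petrov_entropy_ineq_general k m n a hm hmn hsum
end

section
/- Let n_1, ..., n_k be positive reals summing to n, and let 0 < a < 1 with p_i = n_i/n. Suppose p_1, ..., p_t < a ≤ p_{t+1}, ..., p_k. Then ∑_{i=1}^k H(p_i) ≥ ((p_1 + ... + p_t + a(k - t - 1))/(1 - a)) · log₂(1/a), where H(p) = -p log₂ p. -/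
open Finset Real

/-!
Write `H(p) = -p logb b p`. For `p ≤ a`, monotonicity of `log` gives `H(p) ≥ p · logb b (1/a)`;
for `a ≤ p ≤ 1`, the chord of the concave `H` from `a` to `1` (where `H` vanishes) gives
`H(p) ≥ (1 - p)/(1 - a) · H(a)`. Summing, and using `∑ p_i ≤ 1` for the large `p_i`, yields
the bound, since at least `k - t` of the `p_i` are large.
-/

namespace Real

lemma mul_log_inv_le_negMulLog {p a : ℝ} (hp : 0 ≤ p) (hpa : p ≤ a) :
    p * log a⁻¹ ≤ negMulLog p := by
  rcases hp.eq_or_lt with rfl | hp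
  · simp
  rw [log_inv, negMulLog]
  nlinarith [log_le_log hp hpa]

lemma mul_negMulLog_le_negMulLog {p a : ℝ} (ha0 : 0 ≤ a) (ha1 : a < 1) (hap : a ≤ p)
    (hp1 : p ≤ 1) : (1 - p) / (1 - a) * negMulLog a ≤ negMulLog p := by
  have h1a : 0 < 1 - a := by linarith
  have hchord := concaveOn_negMulLog.2 (Set.mem_Ici.2 ha0) (Set.mem_Ici.2 zero_le_one)
    (div_nonneg (by linarith) h1a.le : 0 ≤ (1 - p) / (1 - a))
    (div_nonneg (by linarith) h1a.le : 0 ≤ (p - a) / (1 - a)) (by field_simp; ring)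
  have hp : (1 - p) / (1 - a) * a + (p - a) / (1 - a) * 1 = p := by field_simp; ring
  simpa only [smul_eq_mul, hp, negMulLog_one, mul_zero, add_zero] using hchord

lemma neg_mul_logb_eq_negMulLog_div {b p : ℝ} : -p * logb b p = negMulLog p / log b := by
  rw [negMulLog, logb]; ring

lemma mul_logb_inv_le_neg_mul_logb {b p a : ℝ} (hb : 1 < b) (hp : 0 ≤ p) (hpa : p ≤ a) :
    p * logb b a⁻¹ ≤ -p * logb b p := by
  rw [neg_mul_logb_eq_negMulLog_div, logb, ← mul_div_assoc]
  exact div_le_div_of_nonneg_right (mul_log_inv_le_negMulLog hp hpa) (log_pos hb).le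

lemma mul_neg_mul_logb_le_neg_mul_logb {b p a : ℝ} (hb : 1 < b) (ha0 : 0 ≤ a) (ha1 : a < 1)
    (hap : a ≤ p) (hp1 : p ≤ 1) :
    (1 - p) / (1 - a) * (a * logb b a⁻¹) ≤ -p * logb b p := by
  rw [logb_inv, mul_neg, ← neg_mul, neg_mul_logb_eq_negMulLog_div,
    neg_mul_logb_eq_negMulLog_div, ← mul_div_assoc]
  exact div_le_div_of_nonneg_right (mul_negMulLog_le_negMulLog ha0 ha1 hap hp1) (log_pos hb).le

end Real

lemma le_sum_neg_mul_logb {ι : Type*} [Fintype ι] [DecidableEq ι] {b a : ℝ} (hb : 1 < b)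
    (ha0 : 0 < a) (ha1 : a < 1) (p : ι → ℝ) (hp0 : ∀ i, 0 ≤ p i) (hp1 : ∑ i, p i ≤ 1)
    (s : Finset ι) (hs : ∀ i ∈ s, p i ≤ a) (hsc : ∀ i ∉ s, a ≤ p i) :
    ((∑ i ∈ s, p i) + a * (#sᶜ - 1)) / (1 - a) * logb b a⁻¹ ≤
      ∑ i, -p i * logb b (p i) := by
  set L := logb b a⁻¹
  have h1a : 0 < 1 - a := by linarith
  have hL : 0 ≤ L := logb_nonneg hb (one_le_inv₀ ha0 |>.2 ha1.le)
  have hsum : ∑ i ∈ s, p i + ∑ i ∈ sᶜ, p i ≤ 1 := by rwa [sum_add_sum_compl]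
  have hcompl : ∑ i ∈ sᶜ, (1 - p i) = #sᶜ - ∑ i ∈ sᶜ, p i := by
    rw [sum_sub_distrib, sum_const, nsmul_one]
  calc ((∑ i ∈ s, p i) + a * (#sᶜ - 1)) / (1 - a) * L
      = (∑ i ∈ s, p i) * L + (#sᶜ - 1 + ∑ i ∈ s, p i) * (a * L / (1 - a)) := by
        field_simp; ring
    _ ≤ (∑ i ∈ s, p i) * L + (∑ i ∈ sᶜ, (1 - p i)) * (a * L / (1 - a)) := by
        gcongr; linarith
    _ = ∑ i ∈ s, p i * L + ∑ i ∈ sᶜ, (1 - p i) / (1 - a) * (a * L) := by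
        rw [sum_mul, sum_mul]
        exact congrArg _ (sum_congr rfl fun i _ => by ring)
    _ ≤ ∑ i ∈ s, -p i * logb b (p i) + ∑ i ∈ sᶜ, -p i * logb b (p i) := by
        refine add_le_add (sum_le_sum fun i hi => ?_) (sum_le_sum fun i hi => ?_)
        · exact mul_logb_inv_le_neg_mul_logb hb (hp0 i) (hs i hi)
        · exact mul_neg_mul_logb_le_neg_mul_logb hb ha0.le ha1 (hsc i (mem_compl.1 hi))
            ((single_le_sum (fun j _ => hp0 j) (mem_univ i)).trans hp1)
    _ = ∑ i, -p i * logb b (p i) := sum_add_sum_compl s _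

theorem petrov_concavity_step_general (k t : ℕ) (ν : Fin k → ℝ)
    (hν : ∀ i, 0 < ν i) (n : ℝ) (hn : n = ∑ i, ν i)
    (a : ℝ) (ha0 : 0 < a) (ha1 : a < 1)
    (hsmall : ∀ i : Fin k, (i : ℕ) < t → ν i / n < a)
    (hbig : ∀ i : Fin k, t ≤ (i : ℕ) → a ≤ ν i / n) :
    ∑ i, -(ν i / n) * Real.logb 2 (ν i / n) ≥
      ((∑ i ∈ Finset.univ.filter (fun i : Fin k => (i : ℕ) < t), ν i / n)
          + a * ((k : ℝ) - t - 1)) / (1 - a) * Real.logb 2 (1 / a) := by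
  set s := Finset.univ.filter (fun i : Fin k => (i : ℕ) < t)
  have hcard : (k : ℝ) - t ≤ #sᶜ := by
    rw [card_compl, Fin.card_filter_val_lt, Fintype.card_fin, Nat.cast_sub (min_le_left k t)]
    gcongr
    exact_mod_cast min_le_right k t
  have hmain := le_sum_neg_mul_logb one_lt_two ha0 ha1 (fun i => ν i / n)
    (fun i => div_nonneg (hν i).le (hn ▸ sum_nonneg fun j _ => (hν j).le))
    (by rw [← sum_div, ← hn]; exact div_self_le_one n) s
    (fun i hi => (hsmall i (mem_filter.1 hi).2).le)
    (fun i hi => hbig i (not_lt.1 fun h => hi (mem_filter.2 ⟨mem_univ i, h⟩)))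
  rw [one_div, ge_iff_le]
  refine le_trans ?_ hmain
  have hL : 0 ≤ logb 2 a⁻¹ := logb_nonneg one_lt_two (one_le_inv₀ ha0 |>.2 ha1.le)
  gcongr

/-- Petrov's concavity argument: with `p i = ν i / n`, `p i < a` for `i < t` and
`a ≤ p i` for `t ≤ i`, we have
`∑ H(p i) ≥ ((p 1 + ⋯ + p t + a (k - t - 1)) / (1 - a)) · log₂ (1/a)`. -/
theorem petrov_concavity_step (k t : ℕ) (ht : t ≤ k) (ν : Fin k → ℝ)
    (hν : ∀ i, 0 < ν i) (n : ℝ) (hn : n = ∑ i, ν i)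
    (a : ℝ) (ha0 : 0 < a) (ha1 : a < 1)
    (hsmall : ∀ i : Fin k, (i : ℕ) < t → ν i / n < a)
    (hbig : ∀ i : Fin k, t ≤ (i : ℕ) → a ≤ ν i / n) :
    ∑ i, -(ν i / n) * Real.logb 2 (ν i / n) ≥
      ((∑ i ∈ Finset.univ.filter (fun i : Fin k => (i : ℕ) < t), ν i / n)
          + a * ((k : ℝ) - t - 1)) / (1 - a) * Real.logb 2 (1 / a) :=
  petrov_concavity_step_general k t ν hν n hn a ha0 ha1 hsmall hbig
end

section
/- Let m, n ≥ 1 be integers and let c : Finset E → ℕ be a function on subsets of a finite set E of size m, satisfying: c(∅) ≥ 1, c(F) ≤ n for all F, and for every F ⊆ E there are at least n - c(F) elements e ∈ E \ F with c(F ∪ {e}) ≥ c(F) + 1, while c(F ∪ {e}) ≥ c(F) for every e. Then for all k ∈ ℕ: (1/m^k) ∑_{(e_1,...,e_k) ∈ E^k} (c({e_1,...,e_k}) - 1)/(n - 1) ≥ 1 - (1 - 1/m)^k, assuming n ≥ 2. -/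
/-!
Write `S k = ∑_{t ∈ E^k} (c {t₁,…,t_k} - 1)`. Appending one more coordinate `e` to a tuple with
entry set `F` raises `c` by at least one for `n - c F` choices of `e` and never lowers it, so
summing over `e` gives `∑_e (c (insert e F) - 1) ≥ (m - 1)(c F - 1) + (n - 1)`. Hence
`S (k+1) ≥ (m - 1) S k + (n - 1) m^k`, and since `S 0 ≥ 0` this recurrence forces
`S k ≥ (n - 1)(m^k - (m - 1)^k)`, which is the claim after dividing by `(n - 1) m^k`.
-/

open Finset

theorem Fin.image_univ_cons {α : Type*} [DecidableEq α] {k : ℕ} (a : α) (t : Fin k → α) :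
    image (Fin.cons a t : Fin (k + 1) → α) univ = insert a (image t univ) :=
  coe_injective <| by
    simpa only [coe_image, coe_insert, coe_univ, Set.image_univ] using Fin.range_cons a t

theorem sum_fun_fin_succ_image {α M : Type*} [Fintype α] [DecidableEq α] [AddCommMonoid M]
    (g : Finset α → M) (k : ℕ) :
    ∑ t : Fin (k + 1) → α, g (image t univ) =
      ∑ t : Fin k → α, ∑ a, g (insert a (image t univ)) := by
  rw [← (Fin.consEquiv fun _ ↦ α).sum_comp, Fintype.sum_prod_type, sum_comm]
  exact sum_congr rfl fun t _ ↦ sum_congr rfl fun a _ ↦ congrArg g (Fin.image_univ_cons a t)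

theorem mul_pow_sub_pow_le_of_recurrence {x : ℕ → ℝ} {m a : ℝ} (hm : 1 ≤ m) (h0 : 0 ≤ x 0)
    (hstep : ∀ k, (m - 1) * x k + a * m ^ k ≤ x (k + 1)) (k : ℕ) :
    a * (m ^ k - (m - 1) ^ k) ≤ x k := by
  induction k with
  | zero => simpa using h0
  | succ k ih =>
    calc a * (m ^ (k + 1) - (m - 1) ^ (k + 1))
        = (m - 1) * (a * (m ^ k - (m - 1) ^ k)) + a * m ^ k := by ring
      _ ≤ (m - 1) * x k + a * m ^ k := by gcongr
      _ ≤ x (k + 1) := hstep k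

section ClassCount

variable {E : Type*} [Fintype E] [DecidableEq E] (c : Finset E → ℕ) (n : ℕ)

theorem sub_le_sum_insert_sub (F : Finset E) (hcn : c F ≤ n)
    (hmono : ∀ e, c F ≤ c (insert e F))
    (hinc : n - c F ≤ #{e ∈ univ \ F | c F + 1 ≤ c (insert e F)}) :
    (n : ℝ) - c F ≤ ∑ e, ((c (insert e F) : ℝ) - c F) := by
  set A := {e ∈ univ \ F | c F + 1 ≤ c (insert e F)}
  calc (n : ℝ) - c F = ((n - c F : ℕ) : ℝ) := (Nat.cast_sub hcn).symm
    _ ≤ #A := by exact_mod_cast hinc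
    _ = ∑ e ∈ A, (1 : ℝ) := by simp
    _ ≤ ∑ e ∈ A, ((c (insert e F) : ℝ) - c F) := sum_le_sum fun e he ↦
      le_sub_iff_add_le'.mpr (by exact_mod_cast (mem_filter.mp he).2)
    _ ≤ ∑ e, ((c (insert e F) : ℝ) - c F) :=
      sum_le_sum_of_subset_of_nonneg (subset_univ A) fun e _ _ ↦
        sub_nonneg.mpr (by exact_mod_cast hmono e)

theorem card_sub_one_mul_add_le_sum_insert (F : Finset E) (hcn : c F ≤ n)
    (hmono : ∀ e, c F ≤ c (insert e F))
    (hinc : n - c F ≤ #{e ∈ univ \ F | c F + 1 ≤ c (insert e F)}) :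
    ((Fintype.card E : ℝ) - 1) * ((c F : ℝ) - 1) + ((n : ℝ) - 1) ≤
      ∑ e, ((c (insert e F) : ℝ) - 1) := by
  have key := sub_le_sum_insert_sub c n F hcn hmono hinc
  have hsplit : ∑ e, ((c (insert e F) : ℝ) - 1) =
      ∑ e, ((c (insert e F) : ℝ) - c F) + Fintype.card E * ((c F : ℝ) - 1) := by
    rw [← Finset.card_univ, ← nsmul_eq_mul, ← sum_const, ← sum_add_distrib]
    exact sum_congr rfl fun e _ ↦ by ring
  rw [hsplit]
  linarith

theorem card_sub_one_mul_add_le_sum_fun_fin_succ (hcn : ∀ F, c F ≤ n)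
    (hmono : ∀ (F : Finset E) (e : E), c F ≤ c (insert e F))
    (hinc : ∀ F : Finset E, n - c F ≤ #{e ∈ univ \ F | c F + 1 ≤ c (insert e F)}) (k : ℕ) :
    ((Fintype.card E : ℝ) - 1) * ∑ t : Fin k → E, ((c (image t univ) : ℝ) - 1) +
        ((n : ℝ) - 1) * (Fintype.card E : ℝ) ^ k ≤
      ∑ t : Fin (k + 1) → E, ((c (image t univ) : ℝ) - 1) := by
  calc _ = ∑ t : Fin k → E, (((Fintype.card E : ℝ) - 1) * ((c (image t univ) : ℝ) - 1) +
          ((n : ℝ) - 1)) := by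
        simp only [sum_add_distrib, mul_sum, sum_const, card_univ, Fintype.card_fun,
          Fintype.card_fin, nsmul_eq_mul, Nat.cast_pow]
        ring
    _ ≤ ∑ t : Fin k → E, ∑ e, ((c (insert e (image t univ)) : ℝ) - 1) := sum_le_sum fun t _ ↦
        card_sub_one_mul_add_le_sum_insert c n _ (hcn _) (hmono _) (hinc _)
    _ = _ := (sum_fun_fin_succ_image (fun F ↦ (c F : ℝ) - 1) k).symm

end ClassCount

/-- Averaged class-counting bound (Theorem `dense`, first inequality):
if `c : Finset E → ℕ` starts at least `1`, is bounded by `n`, is monotone under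
insertion, and each `F` admits at least `n - c F` elements strictly increasing `c`,
then `(1/m^k) ∑_{(e₁,…,e_k) ∈ E^k} (c {e₁,…,e_k} - 1)/(n-1) ≥ 1 - (1 - 1/m)^k`. -/
theorem avg_class_count_bound {E : Type*} [Fintype E] [DecidableEq E]
    (m n : ℕ) (hm : 1 ≤ m) (hn : 2 ≤ n) (hE : Fintype.card E = m)
    (c : Finset E → ℕ)
    (hc1 : 1 ≤ c ∅)
    (hcn : ∀ F : Finset E, c F ≤ n)
    (hmono : ∀ (F : Finset E) (e : E), c F ≤ c (insert e F))
    (hinc : ∀ F : Finset E,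
      n - c F ≤ ((Finset.univ \ F).filter (fun e => c F + 1 ≤ c (insert e F))).card) :
    ∀ k : ℕ,
      (1 / (m : ℝ) ^ k) *
          ∑ t : Fin k → E, ((c (Finset.image t Finset.univ) : ℝ) - 1) / ((n : ℝ) - 1) ≥
        1 - (1 - 1 / (m : ℝ)) ^ k := by
  intro k
  subst hE
  have hm' : (1 : ℝ) ≤ Fintype.card E := by exact_mod_cast hm
  have hn' : (0 : ℝ) < n - 1 := by
    have : (2 : ℝ) ≤ n := by exact_mod_cast hn
    linarith
  have hS := mul_pow_sub_pow_le_of_recurrence (x := fun k ↦ ∑ t : Fin k → E,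
      ((c (image t univ) : ℝ) - 1)) hm'
    (Fintype.sum_nonneg fun t ↦ by simpa [univ_eq_empty] using hc1)
    (card_sub_one_mul_add_le_sum_fun_fin_succ c n hcn hmono hinc) k
  rw [ge_iff_le, ← sum_div]
  calc 1 - (1 - 1 / (Fintype.card E : ℝ)) ^ k
      = (n - 1) * ((Fintype.card E : ℝ) ^ k - (Fintype.card E - 1) ^ k) /
          ((n - 1) * (Fintype.card E : ℝ) ^ k) := by
        rw [one_sub_div (by positivity), div_pow]
        field_simp
    _ ≤ (∑ t : Fin k → E, ((c (image t univ) : ℝ) - 1)) /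
          ((n - 1) * (Fintype.card E : ℝ) ^ k) := by gcongr
    _ = _ := by rw [one_div_mul_eq_div, div_div]
end

section
/- Let m, n ≥ 2 be integers and let c : Finset E → ℕ be a function on subsets of a finite set E of size m, satisfying: c(∅) ≥ 1, monotonicity (F ⊆ F' implies c(F) ≤ c(F')), c(F) ≤ n for all F, and for every F ⊆ E there are at least n - c(F) elements e ∈ E \ F with c(F ∪ {e}) ≥ c(F) + 1. Then for every k ∈ ℕ with k ≤ m: ∑_{F ⊆ E, |F| = k} (c(F) - 1)/(n - 1) ≥ binom(m-1, k-1). -/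
open Finset Real

/-- Double counting: pairs (F, e) with |F|=k, e ∉ F, grouped by F' = insert e F. -/
lemma dc_aux {E : Type*} [Fintype E] [DecidableEq E] (k : ℕ) (f : Finset E → ℝ) :
    ∑ F ∈ Finset.univ.powersetCard k, ∑ e ∈ Finset.univ \ F, f (insert e F)
      = (k + 1 : ℝ) * ∑ F ∈ Finset.univ.powersetCard (k + 1), f F := by
  rw [Finset.mul_sum]
  have hR : ∀ F ∈ Finset.univ.powersetCard (k+1), (k+1 : ℝ) * f F = ∑ e ∈ F, f F := by
    intro F hF
    rw [Finset.sum_const, (Finset.mem_powersetCard.1 hF).2]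
    ring
  rw [Finset.sum_congr rfl hR, Finset.sum_sigma', Finset.sum_sigma']
  apply Finset.sum_bij' (fun p _ => (⟨insert p.2 p.1, p.2⟩ : Σ _ : Finset E, E))
    (fun p _ => (⟨p.1.erase p.2, p.2⟩ : Σ _ : Finset E, E))
  · rintro ⟨F, e⟩ hp
    simp only [Finset.mem_sigma, Finset.mem_powersetCard, Finset.mem_sdiff] at hp ⊢
    refine ⟨⟨Finset.subset_univ _, ?_⟩, Finset.mem_insert_self _ _⟩
    rw [Finset.card_insert_of_notMem hp.2.2, hp.1.2]
  · rintro ⟨F, e⟩ hp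
    simp only [Finset.mem_sigma, Finset.mem_powersetCard, Finset.mem_sdiff] at hp ⊢
    refine ⟨⟨Finset.subset_univ _, ?_⟩, Finset.mem_univ _, Finset.notMem_erase _ _⟩
    rw [Finset.card_erase_of_mem hp.2, hp.1.2]
    omega
  · rintro ⟨F, e⟩ hp
    simp only [Finset.mem_sigma, Finset.mem_sdiff] at hp
    simp [Finset.erase_insert hp.2.2]
  · rintro ⟨F, e⟩ hp
    simp only [Finset.mem_sigma] at hp
    simp [Finset.insert_erase hp.2]
  · rintro ⟨F, e⟩ hp
    simp only [Finset.mem_sigma, Finset.mem_sdiff] at hp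
    simp [Finset.insert_erase, Finset.erase_insert hp.2.2]

/-- Key step inequality for a fixed `F` of size `k`. -/
lemma key_aux {E : Type*} [Fintype E] [DecidableEq E]
    (m n : ℕ) (hE : Fintype.card E = m)
    (c : Finset E → ℕ)
    (hc1 : 1 ≤ c ∅)
    (hmono : ∀ F F' : Finset E, F ⊆ F' → c F ≤ c F')
    (hcn : ∀ F : Finset E, c F ≤ n)
    (hinc : ∀ F : Finset E,
      n - c F ≤ ((Finset.univ \ F).filter (fun e => c F + 1 ≤ c (insert e F))).card)
    (k : ℕ) (hk : k + 1 ≤ m) (F : Finset E) (hF : F.card = k) :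
    ∑ e ∈ Finset.univ \ F, ((c (insert e F) : ℝ) - 1)
      ≥ ((m : ℝ) - k - 1) * ((c F : ℝ) - 1) + ((n : ℝ) - 1) := by
  have hcard : (Finset.univ \ F).card = m - k := by
    rw [Finset.card_sdiff_of_subset (Finset.subset_univ F), Finset.card_univ, hE, hF]
  have hkm : k ≤ m := by omega
  have hcardR : ((Finset.univ \ F).card : ℝ) = (m : ℝ) - k := by
    rw [hcard]; push_cast [hkm]; ring
  set A := (Finset.univ \ F).filter (fun e => c F + 1 ≤ c (insert e F)) with hA
  have hAsub : A ⊆ Finset.univ \ F := Finset.filter_subset _ _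
  have hAcard : ((n : ℝ) - (c F : ℝ)) ≤ (A.card : ℝ) := by
    have := hinc F
    have h2 : ((n - c F : ℕ) : ℝ) ≤ (A.card : ℝ) := by exact_mod_cast this
    have h3 : (n : ℝ) - (c F : ℝ) ≤ ((n - c F : ℕ) : ℝ) := by
      rw [Nat.cast_sub (hcn F)]
    linarith
  -- sum of increments bound
  have hstep : ∑ e ∈ Finset.univ \ F, ((c (insert e F) : ℝ) - (c F : ℝ))
      ≥ (A.card : ℝ) := by
    calc ∑ e ∈ Finset.univ \ F, ((c (insert e F) : ℝ) - (c F : ℝ))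
        ≥ ∑ e ∈ A, ((c (insert e F) : ℝ) - (c F : ℝ)) := by
          apply Finset.sum_le_sum_of_subset_of_nonneg hAsub
          intro e _ _
          have := hmono F (insert e F) (Finset.subset_insert e F)
          simp only [sub_nonneg]
          exact_mod_cast this
      _ ≥ ∑ e ∈ A, (1 : ℝ) := by
          apply Finset.sum_le_sum
          intro e he
          have := (Finset.mem_filter.1 he).2
          have : (c F : ℝ) + 1 ≤ (c (insert e F) : ℝ) := by exact_mod_cast this
          linarith
      _ = (A.card : ℝ) := by simp
  have hsplit : ∑ e ∈ Finset.univ \ F, ((c (insert e F) : ℝ) - 1)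
      = ∑ e ∈ Finset.univ \ F, ((c (insert e F) : ℝ) - (c F : ℝ))
        + ((m : ℝ) - k) * ((c F : ℝ) - 1) := by
    have he : ∀ e ∈ Finset.univ \ F, ((c (insert e F) : ℝ) - 1)
        = ((c (insert e F) : ℝ) - (c F : ℝ)) + ((c F : ℝ) - 1) := by
      intro e _; ring
    rw [Finset.sum_congr rfl he, Finset.sum_add_distrib, Finset.sum_const,
      nsmul_eq_mul, hcardR]
  rw [hsplit]
  have h1F : (1 : ℝ) ≤ (c F : ℝ) := by
    exact_mod_cast le_trans hc1 (hmono ∅ F (Finset.empty_subset F))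
  linarith [hstep, hAcard]

lemma choose_id_real (m k : ℕ) (hkm : k + 1 ≤ m) :
    ((m : ℝ) - k - 1) * (if k = 0 then 0 else ((m - 1).choose (k - 1) : ℝ))
      + (m.choose k : ℝ) = ((k : ℝ) + 1) * (((m - 1).choose k : ℝ)) := by
  rcases Nat.eq_zero_or_pos k with hk0 | hk1
  · subst hk0; simp
  · rw [if_neg (by omega)]
    have h1 : (m - 1).choose ((k - 1) + 1) * ((k - 1) + 1)
        = (m - 1).choose (k - 1) * ((m - 1) - (k - 1)) := Nat.choose_succ_right_eq _ _
    have hk' : (k - 1) + 1 = k := by omega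
    have hmk : (m - 1) - (k - 1) = m - k := by omega
    rw [hk', hmk] at h1
    have h2 : m.choose k = (m - 1).choose (k - 1) + (m - 1).choose k := by
      have hm' : m = (m - 1) + 1 := by omega
      rw [hm', ← hk', Nat.choose_succ_succ]
      simp [hk']
    have h1R : ((m - 1).choose k : ℝ) * k = ((m - 1).choose (k - 1) : ℝ) * ((m : ℝ) - k) := by
      have h1' := congrArg (Nat.cast (R := ℝ)) h1
      push_cast [Nat.cast_sub (show k ≤ m by omega)] at h1'
      linarith [h1']
    have h2R : (m.choose k : ℝ) = ((m - 1).choose (k - 1) : ℝ) + ((m - 1).choose k : ℝ) := by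
      exact_mod_cast congrArg (fun x : ℕ => (x : ℝ)) h2
    linear_combination h2R - h1R

/-- Class-counting bound over subsets of fixed size (inner induction of Theorem `dense`):
`∑_{F ⊆ E, |F| = k} (c F - 1)/(n - 1) ≥ C(m-1, k-1)` (interpreted as `0` when `k = 0`). -/
theorem class_count_powersetCard_bound {E : Type*} [Fintype E] [DecidableEq E]
    (m n : ℕ) (hm : 2 ≤ m) (hn : 2 ≤ n) (hE : Fintype.card E = m)
    (c : Finset E → ℕ)
    (hc1 : 1 ≤ c ∅)
    (hmono : ∀ F F' : Finset E, F ⊆ F' → c F ≤ c F')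
    (hcn : ∀ F : Finset E, c F ≤ n)
    (hinc : ∀ F : Finset E,
      n - c F ≤ ((Finset.univ \ F).filter (fun e => c F + 1 ≤ c (insert e F))).card) :
    ∀ k : ℕ, k ≤ m →
      ∑ F ∈ Finset.univ.powersetCard k, ((c F : ℝ) - 1) / ((n : ℝ) - 1) ≥
        (if k = 0 then 0 else ((m - 1).choose (k - 1) : ℝ)) := by
  have hn1 : (0 : ℝ) < (n : ℝ) - 1 := by
    have : (2 : ℝ) ≤ (n : ℝ) := by exact_mod_cast hn
    linarith
  intro k
  induction k with
  | zero =>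
    intro _
    rw [if_pos rfl, Finset.powersetCard_zero, Finset.sum_singleton]
    apply div_nonneg _ (le_of_lt hn1)
    have : (1 : ℝ) ≤ (c ∅ : ℝ) := by exact_mod_cast hc1
    linarith
  | succ k ih =>
    intro hk1
    have hk : k ≤ m := by omega
    have IH := ih hk
    rw [← Finset.sum_div] at IH
    rw [← Finset.sum_div, if_neg (Nat.succ_ne_zero k), Nat.add_sub_cancel,
      ge_iff_le, le_div_iff₀ hn1]
    have hdc := dc_aux (E := E) k (fun F => ((c F : ℝ) - 1))
    -- notation
    set Sk := ∑ F ∈ Finset.univ.powersetCard k, ((c F : ℝ) - 1) with hSk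
    set S' := ∑ F ∈ Finset.univ.powersetCard (k + 1), ((c F : ℝ) - 1) with hS'
    set R := (if k = 0 then (0 : ℝ) else ((m - 1).choose (k - 1) : ℝ)) with hR
    have hIH : ((n : ℝ) - 1) * R ≤ Sk := by
      rw [ge_iff_le, le_div_iff₀ hn1] at IH
      linarith
    have hlow : ∑ F ∈ Finset.univ.powersetCard k,
        (((m : ℝ) - k - 1) * ((c F : ℝ) - 1) + ((n : ℝ) - 1))
        ≤ ∑ F ∈ Finset.univ.powersetCard k, ∑ e ∈ Finset.univ \ F,
            ((c (insert e F) : ℝ) - 1) := by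
      apply Finset.sum_le_sum
      intro F hF
      exact key_aux m n hE c hc1 hmono hcn hinc k hk1 F (Finset.mem_powersetCard.1 hF).2
    have hsum : ∑ F ∈ Finset.univ.powersetCard k,
        (((m : ℝ) - k - 1) * ((c F : ℝ) - 1) + ((n : ℝ) - 1))
        = ((m : ℝ) - k - 1) * Sk + ((n : ℝ) - 1) * (m.choose k : ℝ) := by
      rw [Finset.sum_add_distrib, ← Finset.mul_sum, Finset.sum_const,
        Finset.card_powersetCard, Finset.card_univ, hE, nsmul_eq_mul]
      ring
    have hmk : (0 : ℝ) ≤ (m : ℝ) - k - 1 := by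
      have : ((k : ℝ) + 1) ≤ (m : ℝ) := by exact_mod_cast hk1
      linarith
    have hid := choose_id_real m k hk1
    rw [← hR] at hid
    have hmul : ((k : ℝ) + 1) * ((((m - 1).choose k : ℝ)) * ((n : ℝ) - 1))
        ≤ ((k : ℝ) + 1) * S' := by
      nlinarith [mul_nonneg hmk (by linarith : (0 : ℝ) ≤ Sk - ((n : ℝ) - 1) * R)]
    exact le_of_mul_le_mul_left hmul (by positivity)
end

section
/- Let V be a finite set of size n ≥ 1, E a finite set of size m ≥ 1, d : V × V → ℕ a function with d(u,v) ≤ m for all u,v, and for each pair (u,v) a set D(u,v) ⊆ E with |D(u,v)| ≥ d(u,v). Then for any k ∈ ℕ: (1/m^k) ∑_{(e_1,...,e_k) ∈ E^k} [-log₂( (1/n²) ∑_{u,v ∈ V} ∏_{i=1}^k 1{e_i ∉ D(u,v)} )] ≥ -log₂( (1/n²) ∑_{u,v ∈ V} (1 - d(u,v)/m)^k ), provided the arguments of the logarithms are positive. -/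
open Finset Real

/-- Jensen step of Theorem `sparse`: the average over `k`-tuples of edges of the
negative log of the fraction of pairs avoiding those edges is bounded below by the
negative log of `(1/n²) ∑_{u,v} (1 - d(u,v)/m)^k`. -/
theorem sparse_jensen_bound {V E : Type*} [Fintype V] [Fintype E] [DecidableEq E]
    (n m : ℕ) (hV : Fintype.card V = n) (hE : Fintype.card E = m)
    (hn : 1 ≤ n) (hm : 1 ≤ m)
    (d : V × V → ℕ) (hdm : ∀ uv : V × V, d uv ≤ m)
    (D : V × V → Finset E) (hD : ∀ uv : V × V, d uv ≤ (D uv).card)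
    (hdiag : ∀ u : V, d (u, u) = 0) (hDdiag : ∀ u : V, D (u, u) = ∅) :
    ∀ k : ℕ,
      (1 / (m : ℝ) ^ k) *
          ∑ t : Fin k → E,
            (-Real.logb 2 ((1 / (n : ℝ) ^ 2) *
              ∑ u : V, ∑ v : V, ∏ i : Fin k, (if t i ∈ D (u, v) then (0 : ℝ) else 1))) ≥
        -Real.logb 2 ((1 / (n : ℝ) ^ 2) *
          ∑ u : V, ∑ v : V, (1 - (d (u, v) : ℝ) / m) ^ k) := by
  intro k
  have hn0 : (0:ℝ) < n := by exact_mod_cast hn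
  have hm0 : (0:ℝ) < m := by exact_mod_cast hm
  have hVne : Nonempty V := by
    rw [← Fintype.card_pos_iff, hV]; exact hn
  have hEne : Nonempty E := by
    rw [← Fintype.card_pos_iff, hE]; exact hm
  have hFne : Nonempty (Fin k → E) := ⟨fun _ => Classical.arbitrary E⟩
  set g : (Fin k → E) → ℝ := fun t => (1 / (n : ℝ) ^ 2) *
      ∑ u : V, ∑ v : V, ∏ i : Fin k, (if t i ∈ D (u, v) then (0 : ℝ) else 1) with hg
  -- positivity of each g t
  have hprod_nonneg : ∀ t : Fin k → E, ∀ u v : V,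
      (0:ℝ) ≤ ∏ i : Fin k, (if t i ∈ D (u, v) then (0 : ℝ) else 1) := by
    intro t u v
    apply Finset.prod_nonneg
    intro i _
    split <;> norm_num
  have hgpos : ∀ t : Fin k → E, 0 < g t := by
    intro t
    apply mul_pos (by positivity)
    obtain ⟨u0⟩ := hVne
    apply Finset.sum_pos'
    · intro u _
      exact Finset.sum_nonneg fun v _ => hprod_nonneg t u v
    · refine ⟨u0, Finset.mem_univ _, ?_⟩
      apply Finset.sum_pos'
      · intro v _; exact hprod_nonneg t u0 v
      · refine ⟨u0, Finset.mem_univ _, ?_⟩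
        have h1 : ∀ i : Fin k, (if t i ∈ D (u0, u0) then (0:ℝ) else 1) = 1 := by
          intro i; rw [hDdiag u0]; simp
        rw [Finset.prod_congr rfl (fun i _ => h1 i), Finset.prod_const_one]
        norm_num
  -- cardinality of D is at most m
  have hDm : ∀ uv : V × V, (D uv).card ≤ m := by
    intro uv
    rw [← hE]
    exact Finset.card_le_univ _
  -- the average of g equals A
  set A : ℝ := (1 / (n : ℝ) ^ 2) *
      ∑ u : V, ∑ v : V, (1 - ((D (u, v)).card : ℝ) / m) ^ k with hA
  have htuples : (Fintype.card (Fin k → E) : ℝ) = (m:ℝ) ^ k := by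
    rw [Fintype.card_fun, hE, Fintype.card_fin]
    push_cast; ring
  have havg : (1 / (m : ℝ) ^ k) * ∑ t : Fin k → E, g t = A := by
    have hsumg : ∑ t : Fin k → E, g t
        = (1 / (n : ℝ) ^ 2) * ∑ u : V, ∑ v : V, ((m:ℝ) - (D (u, v)).card) ^ k := by
      rw [← Finset.mul_sum]
      congr 1
      rw [Finset.sum_comm]
      refine Finset.sum_congr rfl fun u _ => ?_
      rw [Finset.sum_comm]
      refine Finset.sum_congr rfl fun v _ => ?_
      rw [← Fintype.sum_pow (fun e => if e ∈ D (u, v) then (0:ℝ) else 1) k]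
      congr 1
      have h2 : ∑ e : E, (if e ∈ D (u, v) then (0:ℝ) else 1)
          = ∑ e : E, ((1:ℝ) - if e ∈ D (u, v) then 1 else 0) := by
        refine Finset.sum_congr rfl fun e _ => ?_; split <;> norm_num
      rw [h2, Finset.sum_sub_distrib, Finset.sum_const, Finset.sum_boole]
      simp [hE, Finset.filter_mem_eq_inter]
    rw [hsumg, hA]
    rw [← mul_assoc, mul_comm (1 / (m:ℝ)^k), mul_assoc, Finset.mul_sum]
    refine congrArg _ (Finset.sum_congr rfl fun u _ => ?_)
    rw [Finset.mul_sum]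
    refine Finset.sum_congr rfl fun v _ => ?_
    have he : (1:ℝ) - ((D (u,v)).card : ℝ)/m = ((m:ℝ) - (D (u,v)).card)/m := by
      field_simp
    rw [he, div_pow]
    ring
  -- Jensen's inequality for log
  have hw : ∑ _t : Fin k → E, (1 / (m : ℝ) ^ k) = 1 := by
    rw [Finset.sum_const, Finset.card_univ, nsmul_eq_mul, htuples]
    field_simp
  have hjen := (strictConcaveOn_log_Ioi.concaveOn).le_map_sum
    (t := Finset.univ) (w := fun _ : Fin k → E => 1 / (m : ℝ) ^ k) (p := g)
    (fun _ _ => by positivity) hw (fun t _ => hgpos t)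
  simp only [smul_eq_mul] at hjen
  have hsum_eq : ∑ t : Fin k → E, (1 / (m:ℝ)^k) * g t = A := by
    rw [← havg, Finset.mul_sum]
  rw [hsum_eq] at hjen
  have hApos : 0 < A := by
    rw [← havg]
    apply mul_pos (by positivity)
    exact Finset.sum_pos (fun t _ => hgpos t) Finset.univ_nonempty
  -- A ≤ B
  set B : ℝ := (1 / (n : ℝ) ^ 2) *
      ∑ u : V, ∑ v : V, (1 - (d (u, v) : ℝ) / m) ^ k with hB
  have hAB : A ≤ B := by
    apply mul_le_mul_of_nonneg_left _ (by positivity)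
    refine Finset.sum_le_sum fun u _ => Finset.sum_le_sum fun v _ => ?_
    have h1 : (d (u,v) : ℝ) ≤ ((D (u,v)).card : ℝ) := by exact_mod_cast hD (u,v)
    have h2 : ((D (u,v)).card : ℝ) ≤ m := by exact_mod_cast hDm (u,v)
    have h3 : ((D (u,v)).card : ℝ) / m ≤ 1 := by rw [div_le_one hm0]; exact h2
    apply pow_le_pow_left₀ (by linarith)
    have : (d (u,v) : ℝ) / m ≤ ((D (u,v)).card : ℝ) / m := by gcongr
    linarith
  -- conclude
  have hlog2 : (0:ℝ) < Real.log 2 := Real.log_pos (by norm_num)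
  have hBA : -Real.logb 2 B ≤ -Real.logb 2 A := by
    apply neg_le_neg
    exact (Real.logb_le_logb (by norm_num) hApos (lt_of_lt_of_le hApos hAB)).2 hAB
  refine le_trans hBA ?_
  calc -Real.logb 2 A = (-Real.log A) / Real.log 2 := by
        rw [← Real.log_div_log]; ring
    _ ≤ (-(∑ t : Fin k → E, (1/(m:ℝ)^k) * Real.log (g t))) / Real.log 2 := by
        gcongr
    _ = ∑ t : Fin k → E, (1/(m:ℝ)^k) * (-Real.logb 2 (g t)) := by
        simp only [← Real.log_div_log]
        rw [← Finset.sum_neg_distrib, Finset.sum_div]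
        refine Finset.sum_congr rfl fun t _ => ?_
        ring
    _ = (1 / (m : ℝ) ^ k) * ∑ t : Fin k → E, (-Real.logb 2 (g t)) := by
        rw [Finset.mul_sum]
end

section
/- Let I, X_1, ..., X_n be jointly distributed discrete random variables such that I is determined by (X_1, ..., X_n), i.e., H(I | X_1,...,X_n) = 0. Fix 0 ≤ k < n and let ε = (1/binom(n,k)) ∑_{J ⊆ {1,...,n}, |J|=k} I(I; (X_i : i ∈ J)) be the average mutual information revealed by k of the variables. Then (1/n) ∑_{i=1}^n H(X_i) ≥ (H(I) - ε)/(n - k). -/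
open Finset Real
open scoped Classical

/-- `P(X = a)` for a random variable `X` on the finite weighted space `(Ω, μ)`. -/
noncomputable def probOf {Ω α : Type*} [Fintype Ω] (μ : Ω → ℝ) (X : Ω → α) (a : α) : ℝ :=
  ∑ ω, if X ω = a then μ ω else 0

/-- Shannon entropy (in bits). -/
noncomputable def entropy {Ω α : Type*} [Fintype Ω] [Fintype α] (μ : Ω → ℝ) (X : Ω → α) : ℝ :=
  -∑ a, probOf μ X a * Real.logb 2 (probOf μ X a)

/-- Mutual information `I(X;Y) = H(X) + H(Y) - H(X,Y)` (in bits). -/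
noncomputable def mutualInfo {Ω α β : Type*} [Fintype Ω] [Fintype α] [Fintype β]
    (μ : Ω → ℝ) (X : Ω → α) (Y : Ω → β) : ℝ :=
  entropy μ X + entropy μ Y - entropy μ (fun ω => (X ω, Y ω))

/-- Conditional entropy `H(X | Y) = H(X,Y) - H(Y)` (in bits). -/
noncomputable def condEntropyOf {Ω α β : Type*} [Fintype Ω] [Fintype α] [Fintype β]
    (μ : Ω → ℝ) (X : Ω → α) (Y : Ω → β) : ℝ :=
  entropy μ (fun ω => (X ω, Y ω)) - entropy μ Y

/-!
For every `k`-set `J`, `H(I) - I(I; X_J) = H(I | X_J)`, and since `I` is a function of `X_J`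
together with `X_{Jᶜ}`, this is at most `H(X_{Jᶜ}) ≤ ∑_{i ∉ J} H(X_i)` by subadditivity.
Averaging over the `k`-sets, each `i` lies outside exactly `(n-1).choose k` of them, and
`(n-1).choose k / n.choose k = (n - k) / n`.
-/

section Distribution
variable {Ω α β : Type*} [Fintype Ω] (μ : Ω → ℝ)

lemma probOf_nonneg (hμ0 : ∀ ω, 0 ≤ μ ω) (X : Ω → α) (a : α) : 0 ≤ probOf μ X a :=
  sum_nonneg fun ω _ => by split_ifs <;> simp [hμ0 ω]

lemma sum_probOf [Fintype α] (X : Ω → α) : ∑ a, probOf μ X a = ∑ ω, μ ω := by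
  unfold probOf
  rw [sum_comm]
  simp

lemma probOf_comp [Fintype α] (X : Ω → α) (f : α → β) (b : β) :
    probOf μ (fun ω => f (X ω)) b = ∑ a ∈ univ.filter (f · = b), probOf μ X a := by
  unfold probOf
  rw [sum_comm]
  refine sum_congr rfl fun ω _ => ?_
  rw [sum_ite_eq (univ.filter (f · = b)) (X ω) (fun _ => μ ω)]
  simp

lemma sum_probOf_pair_left [Fintype β] (X : Ω → α) (Y : Ω → β) (a : α) :
    ∑ b, probOf μ (fun ω => (X ω, Y ω)) (a, b) = probOf μ X a := by
  unfold probOf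
  rw [sum_comm]
  refine sum_congr rfl fun ω _ => ?_
  simp [Prod.ext_iff, ite_and]

lemma sum_probOf_pair_right [Fintype α] (X : Ω → α) (Y : Ω → β) (b : β) :
    ∑ a, probOf μ (fun ω => (X ω, Y ω)) (a, b) = probOf μ Y b := by
  unfold probOf
  rw [sum_comm]
  refine sum_congr rfl fun ω _ => ?_
  simp [Prod.ext_iff, ite_and]

lemma sum_probOf_pair_mul_fst [Fintype α] [Fintype β] (X : Ω → α) (Y : Ω → β) (f : α → ℝ) :
    ∑ c, probOf μ (fun ω => (X ω, Y ω)) c * f c.1 = ∑ a, probOf μ X a * f a := by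
  simp_rw [Fintype.sum_prod_type, ← sum_mul, sum_probOf_pair_left]

lemma sum_probOf_pair_mul_snd [Fintype α] [Fintype β] (X : Ω → α) (Y : Ω → β) (f : β → ℝ) :
    ∑ c, probOf μ (fun ω => (X ω, Y ω)) c * f c.2 = ∑ b, probOf μ Y b * f b := by
  rw [Fintype.sum_prod_type, sum_comm]
  simp_rw [← sum_mul, sum_probOf_pair_right]

end Distribution

/-- Pointwise Gibbs inequality: `log x ≤ x - 1` at `x = p q / r`. -/
lemma mul_logb_add_logb_sub_logb_le {p q r : ℝ} (hr : 0 ≤ r) (hrp : r ≤ p) (hrq : r ≤ q) :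
    r * (logb 2 p + logb 2 q - logb 2 r) ≤ (p * q - r) / log 2 := by
  have hlog2 : 0 < log 2 := log_pos one_lt_two
  rcases hr.eq_or_lt with rfl | hr
  · simpa using div_nonneg (mul_nonneg hrp hrq) hlog2.le
  have hp : 0 < p := hr.trans_le hrp
  have hq : 0 < q := hr.trans_le hrq
  have hgibbs := log_le_sub_one_of_pos (div_pos (mul_pos hp hq) hr)
  rw [log_div (by positivity) hr.ne', log_mul hp.ne' hq.ne'] at hgibbs
  rw [← logb_mul hp.ne' hq.ne', logb, logb, ← sub_div, ← mul_div_assoc]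
  gcongr
  calc r * (log (p * q) - log r) ≤ r * (p * q / r - 1) := by
        rw [log_mul hp.ne' hq.ne']; gcongr
    _ = p * q - r := by field_simp

section Entropy
variable {Ω α β : Type*} [Fintype Ω] [Fintype α] [Fintype β] (μ : Ω → ℝ)

lemma entropy_le_of_determined (hμ0 : ∀ ω, 0 ≤ μ ω) {X : Ω → β} {Y : Ω → α} (f : α → β)
    (hf : ∀ ω, X ω = f (Y ω)) : entropy μ X ≤ entropy μ Y := by
  obtain rfl : X = fun ω => f (Y ω) := funext hf
  unfold entropy
  rw [neg_le_neg_iff, ← sum_fiberwise univ f (fun a => probOf μ Y a * logb 2 (probOf μ Y a))]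
  refine sum_le_sum fun b _ => ?_
  rw [probOf_comp, sum_mul]
  refine sum_le_sum fun a ha => ?_
  rcases (probOf_nonneg μ hμ0 Y a).eq_or_lt with h0 | h0
  · simp [← h0]
  · exact mul_le_mul_of_nonneg_left (logb_le_logb_of_le one_lt_two h0
      (single_le_sum (fun a _ => probOf_nonneg μ hμ0 Y a) ha)) h0.le

lemma entropy_pair_le (hμ0 : ∀ ω, 0 ≤ μ ω) (hμ1 : ∑ ω, μ ω = 1) (X : Ω → α) (Y : Ω → β) :
    entropy μ (fun ω => (X ω, Y ω)) ≤ entropy μ X + entropy μ Y := by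
  set r := probOf μ (fun ω => (X ω, Y ω)) with hr
  have hr0 (c : α × β) : 0 ≤ r c := probOf_nonneg μ hμ0 _ c
  have hrp (c : α × β) : r c ≤ probOf μ X c.1 := by
    rw [← sum_probOf_pair_left μ X Y c.1]
    exact single_le_sum (fun b _ => hr0 (c.1, b)) (mem_univ c.2)
  have hrq (c : α × β) : r c ≤ probOf μ Y c.2 := by
    rw [← sum_probOf_pair_right μ X Y c.2]
    exact single_le_sum (fun a _ => hr0 (a, c.2)) (mem_univ c.1)
  have hgibbs : ∑ c, r c * (logb 2 (probOf μ X c.1) + logb 2 (probOf μ Y c.2) - logb 2 (r c))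
      ≤ ∑ c : α × β, (probOf μ X c.1 * probOf μ Y c.2 - r c) / log 2 :=
    sum_le_sum fun c _ => mul_logb_add_logb_sub_logb_le (hr0 c) (hrp c) (hrq c)
  have hmass : ∑ c : α × β, (probOf μ X c.1 * probOf μ Y c.2 - r c) / log 2 = 0 := by
    rw [← sum_div, sum_sub_distrib, Fintype.sum_prod_type, ← sum_mul_sum]
    simp only [r, sum_probOf, hμ1]
    simp
  simp only [mul_sub, mul_add, sum_sub_distrib, sum_add_distrib, hr] at hgibbs
  rw [sum_probOf_pair_mul_fst μ X Y (fun a => logb 2 (probOf μ X a)),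
    sum_probOf_pair_mul_snd μ X Y (fun b => logb 2 (probOf μ Y b)), ← hr, hmass] at hgibbs
  unfold entropy
  linarith

lemma entropy_eq_zero_of_subsingleton [Subsingleton β] (hμ1 : ∑ ω, μ ω = 1) (X : Ω → β) :
    entropy μ X = 0 := by
  unfold entropy
  rcases isEmpty_or_nonempty β with _ | ⟨⟨b⟩⟩
  · simp
  have hb : probOf μ X b = 1 := by
    rw [← hμ1]
    exact sum_congr rfl fun ω _ => by simp [Subsingleton.elim (X ω) b]
  simp [Fintype.sum_subsingleton _ b, hb]

lemma entropy_tuple_le_sum (hμ0 : ∀ ω, 0 ≤ μ ω) (hμ1 : ∑ ω, μ ω = 1) {ι : Type*}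
    [DecidableEq ι] (X : ι → Ω → α) (T : Finset ι) :
    entropy μ (fun ω (i : T) => X i.1 ω) ≤ ∑ i ∈ T, entropy μ (X i) := by
  induction T using Finset.induction_on with
  | empty => exact (entropy_eq_zero_of_subsingleton μ hμ1 _).le
  | @insert a T ha ih =>
    let glue (v : α × (T → α)) (i : (insert a T : Finset ι)) : α :=
      if h : i.1 = a then v.1 else v.2 ⟨i.1, (mem_insert.mp i.2).resolve_left h⟩
    calc entropy μ (fun ω (i : (insert a T : Finset ι)) => X i.1 ω)
        ≤ entropy μ (fun ω => (X a ω, fun i : T => X i.1 ω)) :=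
          entropy_le_of_determined μ hμ0 glue fun ω => by
            funext i
            by_cases h : i.1 = a <;> simp [glue, h]
      _ ≤ entropy μ (X a) + entropy μ (fun ω (i : T) => X i.1 ω) := entropy_pair_le μ hμ0 hμ1 _ _
      _ ≤ ∑ i ∈ insert a T, entropy μ (X i) := by rw [sum_insert ha]; linarith

end Entropy

lemma entropy_sub_mutualInfo_le_sum_compl {Ω S α ι : Type*} [Fintype Ω] [Fintype S] [Fintype α]
    [Fintype ι] [DecidableEq ι] (μ : Ω → ℝ) (hμ0 : ∀ ω, 0 ≤ μ ω) (hμ1 : ∑ ω, μ ω = 1) (I : Ω → S)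
    (X : ι → Ω → α) (hdet : condEntropyOf μ I (fun ω i => X i ω) = 0) (J : Finset ι) :
    entropy μ I - mutualInfo μ I (fun ω (i : J) => X i.1 ω) ≤ ∑ i ∈ univ \ J, entropy μ (X i) := by
  set XJ : Ω → (J → α) := fun ω i => X i.1 ω
  set XJc : Ω → ((univ \ J : Finset ι) → α) := fun ω i => X i.1 ω
  let glue (v : (J → α) × ((univ \ J : Finset ι) → α)) (i : ι) : α :=
    if h : i ∈ J then v.1 ⟨i, h⟩ else v.2 ⟨i, by simp [h]⟩
  have hall : entropy μ (fun ω i => X i ω) ≤ entropy μ (fun ω => (XJ ω, XJc ω)) :=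
    entropy_le_of_determined μ hμ0 glue fun ω => by
      funext i
      by_cases h : i ∈ J <;> simp [glue, h, XJ, XJc]
  calc entropy μ I - mutualInfo μ I XJ
      = entropy μ (fun ω => (I ω, XJ ω)) - entropy μ XJ := by unfold mutualInfo; ring
    _ ≤ entropy μ (fun ω => (I ω, fun i => X i ω)) - entropy μ XJ := by
        gcongr
        exact entropy_le_of_determined μ hμ0 (fun v => (v.1, fun i : J => v.2 i.1)) fun _ => rfl
    _ = entropy μ (fun ω i => X i ω) - entropy μ XJ := by rw [sub_eq_zero.mp hdet]
    _ ≤ entropy μ XJc := by linarith [entropy_pair_le μ hμ0 hμ1 XJ XJc]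
    _ ≤ ∑ i ∈ univ \ J, entropy μ (X i) := entropy_tuple_le_sum μ hμ0 hμ1 X (univ \ J)

lemma sum_powersetCard_sum_compl {ι M : Type*} [Fintype ι] [DecidableEq ι] [AddCommMonoid M]
    (f : ι → M) (k : ℕ) :
    ∑ J ∈ (univ : Finset ι).powersetCard k, ∑ i ∈ univ \ J, f i
      = (Fintype.card ι - 1).choose k • ∑ i, f i := by
  have hcount (i : ι) : ((univ.powersetCard k).filter (i ∉ ·)).card
      = (Fintype.card ι - 1).choose k := by
    have : (univ.powersetCard k).filter (i ∉ ·) = (univ.erase i).powersetCard k := by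
      ext J
      simp only [mem_filter, mem_powersetCard, subset_erase]
      tauto
    rw [this, card_powersetCard, card_erase_of_mem (mem_univ i), card_univ]
  simp_rw [sdiff_eq_filter, sum_filter]
  rw [sum_comm, smul_sum]
  refine sum_congr rfl fun i _ => ?_
  rw [← sum_filter, sum_const, hcount]

lemma choose_pred_mul_eq {n k : ℕ} (hk : k < n) :
    ((n - 1).choose k : ℝ) * n = n.choose k * (n - k) := by
  obtain ⟨m, rfl⟩ : ∃ m, n = m + 1 := ⟨n - 1, by omega⟩
  rw [Nat.add_sub_cancel, ← Nat.cast_sub hk.le]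
  exact_mod_cast Nat.choose_mul_succ_eq m k

/-- Entropy/communication trade-off: if `I` is determined by `(X_1,…,X_n)` and
`ε` is the average mutual information revealed by `k` of the variables, then
`(1/n) ∑ H(X_i) ≥ (H(I) - ε)/(n - k)`. -/
theorem avg_entropy_tradeoff {Ω S α : Type*} [Fintype Ω] [Fintype S] [Fintype α]
    (μ : Ω → ℝ) (hμ0 : ∀ ω, 0 ≤ μ ω) (hμ1 : ∑ ω, μ ω = 1)
    (n k : ℕ) (hk : k < n)
    (I : Ω → S) (X : Fin n → Ω → α)
    (hdet : condEntropyOf μ I (fun ω (i : Fin n) => X i ω) = 0) :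
    (1 / (n : ℝ)) * ∑ i : Fin n, entropy μ (X i) ≥
      (entropy μ I -
          (1 / (n.choose k : ℝ)) *
            ∑ J ∈ (Finset.univ : Finset (Fin n)).powersetCard k,
              mutualInfo μ I (fun ω (i : {x // x ∈ J}) => X i.1 ω)) /
        ((n : ℝ) - k) := by
  have hn : (n : ℝ) ≠ 0 := by exact_mod_cast (k.zero_le.trans_lt hk).ne'
  have hnk : (0 : ℝ) < n - k := sub_pos.mpr (by exact_mod_cast hk)
  have hC : (0 : ℝ) < n.choose k := by exact_mod_cast Nat.choose_pos hk.le
  have hsum := sum_le_sum fun J (_ : J ∈ (univ : Finset (Fin n)).powersetCard k) =>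
    entropy_sub_mutualInfo_le_sum_compl μ hμ0 hμ1 I X hdet J
  rw [sum_powersetCard_sum_compl, Fintype.card_fin, sum_sub_distrib, sum_const,
    card_powersetCard, card_univ, Fintype.card_fin, nsmul_eq_mul, nsmul_eq_mul] at hsum
  set H := ∑ i, entropy μ (X i)
  have hratio : 1 / (n : ℝ) * H * (n - k) = (n - 1).choose k * H / n.choose k := by
    field_simp
    linear_combination -H * choose_pred_mul_eq hk
  rw [ge_iff_le, div_le_iff₀ hnk, hratio, le_div_iff₀ hC]
  field_simp
  linarith
end
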